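/- If G is a connected 6-γ_tR-edge-supercritical graph, then 2 ≤ diam(G) ≤ 3. -/

import Mathlib

open SimpleGraph Finset

variable {V : Type*}

/-- `S` is a dominating set of `G`. -/
def Dominating (G : SimpleGraph V) (S : Finset V) : Prop :=
  ∀ v, v ∉ S → ∃ u ∈ S, G.Adj u v

/-- `S` is a total dominating set of `G`. -/
def TotalDominating (G : SimpleGraph V) (S : Finset V) : Prop :=
  ∀ v : V, ∃ u ∈ S, G.Adj u v

/-- The domination number γ(G). -/
noncomputable def gamma (G : SimpleGraph V) [Fintype V] : ℕ :=
  sInf {n | ∃ S : Finset V, Dominating G S ∧ S.card = n}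

/-- The total domination number γ_t(G). -/
noncomputable def gammaT (G : SimpleGraph V) [Fintype V] : ℕ :=
  sInf {n | ∃ S : Finset V, TotalDominating G S ∧ S.card = n}

/-- `f` is a total Roman dominating function on `G`. -/
def IsTRDF (G : SimpleGraph V) (f : V → ℕ) : Prop :=
  (∀ v, f v ≤ 2) ∧ (∀ v, f v = 0 → ∃ u, G.Adj u v ∧ f u = 2) ∧
    (∀ v, 0 < f v → ∃ u, G.Adj u v ∧ 0 < f u)

/-- The total Roman domination number γ_tR(G). -/
noncomputable def gammaTR (G : SimpleGraph V) [Fintype V] : ℕ :=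
  sInf {n | ∃ f : V → ℕ, IsTRDF G f ∧ ∑ v, f v = n}

/-- The graph `G + uv`. -/
def addEdge (G : SimpleGraph V) (u v : V) : SimpleGraph V :=
  G ⊔ SimpleGraph.fromEdgeSet {s(u, v)}

/-- The graph `G - uv`. -/
def deleteEdge (G : SimpleGraph V) (u v : V) : SimpleGraph V :=
  G.deleteEdges {s(u, v)}

/-- `G` has no isolated vertices. -/
def NoIsolated (G : SimpleGraph V) : Prop := ∀ v : V, ∃ u, G.Adj u v

/-- The degree of `v` in `G`. -/
noncomputable def degreeN (G : SimpleGraph V) (v : V) : ℕ :=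
  {u | G.Adj v u}.ncard


/-! If `d(x, y) ≥ 4`, a total Roman dominating function `f` of weight `4` of `G + xy` is already
one of `G`. Otherwise the edge `xy` is indispensable: either it dominates an endpoint `x` with
`f x = 0` from `f y = 2`, or it gives a positive endpoint `x` with no positive `G`-neighbour its
positive neighbour `y`. In both cases some vertex within distance `2` of `x` (a neighbour of `x`,
or a vertex at distance `2`) needs weight `2` on its closed neighbourhood, and this weight lies away
from the weight that `f` is forced to put near `y`; together they exceed `4`. So `γ_tR(G) ≤ 4`,
contradicting `γ_tR(G) = 6`. -/

namespace SimpleGraph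

variable {G : SimpleGraph V} {v w x y : V}

lemma Adj.dist_le_dist_add_one (h : G.Adj v w) (u : V) : G.dist u w ≤ G.dist u v + 1 := by
  simpa [dist_eq_one_iff_adj.2 h] using h.reachable.dist_triangle_right u

lemma Connected.exists_dist_eq (hconn : G.Connected) {n : ℕ} (hn : n ≤ G.dist x y) :
    ∃ z, G.dist x z = n := by
  obtain ⟨p, hp⟩ := hconn.exists_walk_length_eq_dist x y
  refine ⟨p.getVert n, le_antisymm ?_ ?_⟩
  · simpa [hp, hn] using G.dist_le (p.take n)
  · have hdrop := G.dist_le (p.drop n)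
    have htri := hconn.dist_triangle (u := x) (v := p.getVert n) (w := y)
    simp only [Walk.drop_length] at hdrop
    omega

end SimpleGraph

section AddEdge

variable {G : SimpleGraph V} {u v x y : V}

lemma addEdge_adj :
    (addEdge G x y).Adj u v ↔ G.Adj u v ∨ u ≠ v ∧ (u = x ∧ v = y ∨ u = y ∧ v = x) := by
  simp only [addEdge, sup_adj, fromEdgeSet_adj, Set.mem_singleton_iff, Sym2.eq_iff]
  tauto

lemma addEdge_comm : addEdge G x y = addEdge G y x := by
  rw [addEdge, addEdge, Sym2.eq_swap]

lemma addEdge_adj_iff_of_ne (hx : v ≠ x) (hy : v ≠ y) : (addEdge G x y).Adj u v ↔ G.Adj u v := by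
  rw [addEdge_adj]
  tauto

end AddEdge

lemma add_add_add_le_sum [Fintype V] (f : V → ℕ) {a b c d : V} (hab : a ≠ b) (hac : a ≠ c)
    (had : a ≠ d) (hbc : b ≠ c) (hbd : b ≠ d) (hcd : c ≠ d) :
    f a + f b + f c + f d ≤ ∑ v, f v := by
  classical
  calc f a + f b + f c + f d = ∑ v ∈ {a, b, c, d}, f v := by
        rw [sum_insert (by simp [hab, hac, had]), sum_insert (by simp [hbc, hbd]),
          sum_pair hcd]
        ring
    _ ≤ ∑ v, f v := sum_le_sum_of_subset (subset_univ _)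

section TotalRoman

variable {G : SimpleGraph V} {f : V → ℕ} {x y : V}

lemma gammaTR_le [Fintype V] (hf : IsTRDF G f) : gammaTR G ≤ ∑ v, f v :=
  Nat.sInf_le ⟨f, hf, rfl⟩

lemma exists_isTRDF_sum_eq_gammaTR [Fintype V] (h : gammaTR G ≠ 0) :
    ∃ f, IsTRDF G f ∧ ∑ v, f v = gammaTR G :=
  Nat.sInf_mem (Nat.nonempty_of_pos_sInf (Nat.pos_of_ne_zero h))

lemma IsTRDF.exists_adj_two_le_add (hf : IsTRDF G f) (v : V) :
    ∃ u, G.Adj u v ∧ 2 ≤ f v + f u := by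
  rcases Nat.eq_zero_or_pos (f v) with hv | hv
  · obtain ⟨u, huv, hu⟩ := hf.2.1 v hv
    exact ⟨u, huv, by omega⟩
  · obtain ⟨u, huv, hu⟩ := hf.2.2 v hv
    exact ⟨u, huv, by omega⟩

lemma IsTRDF.isTRDF_or_of_addEdge (hf : IsTRDF (addEdge G x y) f) :
    IsTRDF G f ∨ ∃ a b, (a = x ∧ b = y ∨ a = y ∧ b = x) ∧
      ((f a = 0 ∧ f b = 2 ∧ ∀ w, G.Adj a w → f w ≠ 2) ∨
        (0 < f a ∧ 0 < f b ∧ ∀ w, G.Adj a w → f w = 0)) := by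
  obtain ⟨hle, hdom, htot⟩ := hf
  by_cases hdomG : ∀ v, f v = 0 → ∃ u, G.Adj u v ∧ f u = 2
  · by_cases htotG : ∀ v, 0 < f v → ∃ u, G.Adj u v ∧ 0 < f u
    · exact .inl ⟨hle, hdomG, htotG⟩
    push Not at htotG
    obtain ⟨a, ha, hna⟩ := htotG
    obtain ⟨b, hba, hb⟩ := htot a ha
    have hG : ¬G.Adj b a := fun h => (hna b h).not_gt hb
    rcases addEdge_adj.1 hba with h | ⟨-, hab⟩
    · exact absurd h hG
    refine .inr ⟨a, b, by tauto, .inr ⟨ha, hb, fun w hw => by have := hna w hw.symm; omega⟩⟩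
  · push Not at hdomG
    obtain ⟨a, ha, hna⟩ := hdomG
    obtain ⟨b, hba, hb⟩ := hdom a ha
    rcases addEdge_adj.1 hba with h | ⟨-, hab⟩
    · exact absurd hb (hna b h)
    exact .inr ⟨a, b, by tauto, .inl ⟨ha, hb, fun w hw => hna w hw.symm⟩⟩

variable [Fintype V]

lemma IsTRDF.four_lt_sum_of_dominates_via_addEdge (hconn : G.Connected)
    (hf : IsTRDF (addEdge G x y) f) (hd : 4 ≤ G.dist x y) (hx : f x = 0) (hy : f y = 2)
    (hx2 : ∀ w, G.Adj x w → f w ≠ 2) : 4 < ∑ v, f v := by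
  have hxy : x ≠ y := by rintro rfl; simp at hd
  obtain ⟨a, hay, ha⟩ : ∃ a, G.Adj a y ∧ 0 < f a := by
    obtain ⟨a, hay, ha⟩ := hf.2.2 y (by omega)
    have hax : a ≠ x := by rintro rfl; omega
    exact ⟨a, (addEdge_adj_iff_of_ne hax hay.ne).1 hay.symm |>.symm, ha⟩
  have hda := hay.dist_le_dist_add_one x
  have := nontrivial_of_ne x y hxy
  obtain ⟨w, hxw⟩ := hconn.preconnected.exists_adj_of_nontrivial x
  have hdw : G.dist x w ≤ 1 := (dist_eq_one_iff_adj.2 hxw).le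
  have hwx : w ≠ x := hxw.ne.symm
  have hwy : w ≠ y := by rintro rfl; omega
  obtain ⟨z, hzw, hz⟩ := hf.exists_adj_two_le_add w
  rw [addEdge_adj_iff_of_ne hwx hwy] at hzw
  have hdz := hzw.symm.dist_le_dist_add_one x
  have hwa : w ≠ a := by rintro rfl; omega
  have hza : z ≠ a := by rintro rfl; omega
  have hzy : z ≠ y := by rintro rfl; omega
  have := add_add_add_le_sum f hay.ne' hwy.symm hzy.symm hwa.symm hza.symm hzw.ne'
  have := hx2 w hxw
  omega

lemma IsTRDF.four_lt_sum_of_total_via_addEdge (hconn : G.Connected)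
    (hf : IsTRDF (addEdge G x y) f) (hd : 4 ≤ G.dist x y) (hx : 0 < f x) (hy : 0 < f y)
    (hx0 : ∀ w, G.Adj x w → f w = 0) : 4 < ∑ v, f v := by
  have hxy : x ≠ y := by rintro rfl; simp at hd
  have := nontrivial_of_ne x y hxy
  obtain ⟨w, hxw⟩ := hconn.preconnected.exists_adj_of_nontrivial x
  have hdw : G.dist x w ≤ 1 := (dist_eq_one_iff_adj.2 hxw).le
  have hwy : w ≠ y := by rintro rfl; omega
  obtain ⟨z, hzw, hz⟩ := hf.exists_adj_two_le_add w
  rw [addEdge_adj_iff_of_ne hxw.ne.symm hwy] at hzw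
  rw [hx0 w hxw, zero_add] at hz
  have hdz := hzw.symm.dist_le_dist_add_one x
  by_cases hzx : z = x
  · -- `f x = 2`; a vertex at distance 2 from `x` forces weight `2` away from `x` and `y`
    have hx2 : 2 ≤ f x := hzx ▸ hz
    obtain ⟨q, hq⟩ := hconn.exists_dist_eq (x := x) (y := y) (n := 2) (by omega)
    obtain ⟨r, hrq, hr⟩ := hf.exists_adj_two_le_add q
    have hqx : q ≠ x := by rintro rfl; simp at hq
    have hqy : q ≠ y := by rintro rfl; omega
    rw [addEdge_adj_iff_of_ne hqx hqy] at hrq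
    have hdr := hrq.symm.dist_le_dist_add_one x
    have hrx : r ≠ x := by rintro rfl; rw [dist_eq_one_iff_adj.2 hrq] at hq; omega
    have hry : r ≠ y := by rintro rfl; omega
    have := add_add_add_le_sum f hxy hqx.symm hrx.symm hqy.symm hry.symm hrq.ne'
    have := hf.1 x
    omega
  · -- `f z = 2` and `z` needs a positive neighbour, which is neither `x` nor `y`
    have hzy : z ≠ y := by rintro rfl; omega
    obtain ⟨r, hrz, hr⟩ := hf.2.2 z (by omega)
    rw [addEdge_adj_iff_of_ne hzx hzy] at hrz
    have hdr := hrz.symm.dist_le_dist_add_one x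
    have hrx : r ≠ x := by rintro rfl; have := hx0 z hrz; omega
    have hry : r ≠ y := by rintro rfl; omega
    have := add_add_add_le_sum f hxy (Ne.symm hzx) (Ne.symm hrx) (Ne.symm hzy) (Ne.symm hry)
      hrz.ne'
    omega

lemma IsTRDF.of_addEdge_of_four_le_dist (hconn : G.Connected) (hf : IsTRDF (addEdge G x y) f)
    (hd : 4 ≤ G.dist x y) (hsum : ∑ v, f v ≤ 4) : IsTRDF G f := by
  rcases hf.isTRDF_or_of_addEdge with hG | ⟨a, b, hab, hcase⟩
  · exact hG
  exfalso
  have hf' : IsTRDF (addEdge G a b) f := by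
    rcases hab with ⟨rfl, rfl⟩ | ⟨rfl, rfl⟩
    exacts [hf, addEdge_comm ▸ hf]
  have hd' : 4 ≤ G.dist a b := by
    rcases hab with ⟨rfl, rfl⟩ | ⟨rfl, rfl⟩
    exacts [hd, dist_comm ▸ hd]
  rcases hcase with ⟨ha, hb, ha2⟩ | ⟨ha, hb, ha0⟩
  · exact (hf'.four_lt_sum_of_dominates_via_addEdge hconn hd' ha hb ha2).not_ge hsum
  · exact (hf'.four_lt_sum_of_total_via_addEdge hconn hd' ha hb ha0).not_ge hsum

end TotalRoman

theorem stmt14 (G : SimpleGraph V) [Fintype V] (hconn : G.Connected)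
    (h6 : gammaTR G = 6) (hne : ∃ u v : V, u ≠ v ∧ ¬G.Adj u v)
    (hsuper : ∀ u v : V, u ≠ v → ¬G.Adj u v → gammaTR (addEdge G u v) = 4) :
    2 ≤ G.diam ∧ G.diam ≤ 3 := by
  obtain ⟨u₀, v₀, huv₀, hnadj₀⟩ := hne
  have : Nontrivial V := nontrivial_of_ne u₀ v₀ huv₀
  have hdist : ∀ x y, G.dist x y ≤ 3 := by
    intro x y
    by_contra! hd
    have hxy : x ≠ y := by rintro rfl; simp at hd
    have hnadj : ¬G.Adj x y := fun h => by rw [dist_eq_one_iff_adj.2 h] at hd; omega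
    have h4 := hsuper x y hxy hnadj
    obtain ⟨f, hf, hsum⟩ := exists_isTRDF_sum_eq_gammaTR (G := addEdge G x y) (by omega)
    have := gammaTR_le (hf.of_addEdge_of_four_le_dist hconn hd (by omega))
    omega
  have hdiam0 : G.diam ≠ 0 := connected_iff_diam_ne_zero.1 hconn
  have hdiam1 : G.diam ≠ 1 := fun h => hnadj₀ (diam_eq_one.1 h ▸ huv₀)
  obtain ⟨u, v, huv⟩ := G.exists_dist_eq_diam
  exact ⟨by omega, huv ▸ hdist u v⟩
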